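/- arXiv:0712.1378 — 2 statements merged into one kernel-verified Lean document; each statement's English description precedes it below -/
import Mathlib

section
/- Let μ be a Borel probability measure on ℝ whose support is a compact subset of (0,∞), let ψ(z) = ∫ z·x/(1 − z·x) dμ(x) for z < 0, let χ : (−1,0) → (−∞,0) denote the inverse of the bijection ψ : (−∞,0) → (−1,0), and define the S-transform S(z) = ((1+z)/z)·χ(z) for z ∈ (−1,0). Then the improper integral ∫₀^1 log S(−t) dt converges, and ∫ log x dμ(x) = −∫₀^1 log S(−t) dt. -/
open Real MeasureTheory Filter
open Set Topology

/-!
Write `Φ(w) = -ψ(-w) = ∫ w x / (1 + w x) dμ` (`negPsi`) and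
`B(w) = ∫ x / (1 + w x) dμ` (`resolventMoment`), so that `Φ = w B`. If the support of `μ`
lies in `[a, b] ⊆ (0, ∞)`, then `Φ` is an increasing bijection of `(0, ∞)` onto `(0, 1)`,
and `χ(-Φ(w)) = -w` gives `S(-Φ(w)) = (1 - Φ(w)) / B(w)`. Substituting `t = Φ(w)` turns
`∫₀¹ log S(-t) dt` into `∫₀^∞ Φ' log ((1 - Φ) / B)`. Since `Φ' = B + w B'`, this integrand
is the derivative of `G = -(1 - Φ) log (1 - Φ) - Φ log B - ∫ log (1 + w x) dμ`
(`primitiveLogS`), which vanishes at `0` and tends to `-∫ log x dμ` at `∞`. Integrability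
follows from `∫₀^∞ Φ' = 1` and from `a (1 - Φ) ≤ B ≤ b (1 - Φ)`, which bounds the logarithm.
-/

section ParametricIntegral

variable {X : Type*} [TopologicalSpace X] [MeasurableSpace X] [OpensMeasurableSpace X]
  [T2Space X] {μ : Measure X} [IsFiniteMeasure μ] {K : Set X}
  {E : Type*} [NormedAddCommGroup E]

theorem integrable_of_continuousOn_of_ae_mem {g : X → E} (hK : IsCompact K)
    (hμK : ∀ᵐ x ∂μ, x ∈ K) (hg : ContinuousOn g K) : Integrable g μ := by
  simpa [IntegrableOn, Measure.restrict_eq_self_of_ae_mem hμK] using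
    hg.integrableOn_compact (μ := μ) hK

theorem hasDerivAt_integral_of_continuousOn_prod [NormedSpace ℝ E] {U : Set ℝ}
    {f f' : ℝ → X → E} (hK : IsCompact K) (hμK : ∀ᵐ x ∂μ, x ∈ K) (hU : IsOpen U)
    (hf : ∀ w ∈ U, ContinuousOn (f w) K)
    (hf' : ContinuousOn (Function.uncurry f') (U ×ˢ K))
    (hderiv : ∀ w ∈ U, ∀ x ∈ K, HasDerivAt (f · x) (f' w x) w) {w₀ : ℝ}
    (hw₀ : w₀ ∈ U) :
    HasDerivAt (fun w => ∫ x, f w x ∂μ) (∫ x, f' w₀ x ∂μ) w₀ := by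
  obtain ⟨ε, hε, hball⟩ := Metric.nhds_basis_closedBall.mem_iff.1 (hU.mem_nhds hw₀)
  obtain ⟨C, hC⟩ := ((isCompact_closedBall w₀ ε).prod hK).exists_bound_of_continuousOn
    (hf'.mono (prod_mono hball subset_rfl))
  have hf'w₀ : ContinuousOn (f' w₀) K :=
    hf'.comp (continuousOn_const.prodMk continuousOn_id) fun x hx => ⟨hw₀, hx⟩
  refine (hasDerivAt_integral_of_dominated_loc_of_deriv_le (bound := fun _ => C)
    (Metric.closedBall_mem_nhds w₀ hε) ?_
    (integrable_of_continuousOn_of_ae_mem hK hμK (hf w₀ hw₀))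
    (integrable_of_continuousOn_of_ae_mem hK hμK hf'w₀).aestronglyMeasurable ?_
    (integrable_const C) ?_).2
  · filter_upwards [hU.mem_nhds hw₀] with w hw using
      (integrable_of_continuousOn_of_ae_mem hK hμK (hf w hw)).aestronglyMeasurable
  · filter_upwards [hμK] with x hx w hw using hC (w, x) ⟨hw, hx⟩
  · filter_upwards [hμK] with x hx w hw using hderiv w (hball hw) x hx

end ParametricIntegral

section RealIntegral

variable {α : Type*} [MeasurableSpace α] {μ : Measure α} {f : α → ℝ}

theorem integral_pos_of_ae_pos [NeZero μ] (hf : Integrable f μ) (h : ∀ᵐ x ∂μ, 0 < f x) :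
    0 < ∫ x, f x ∂μ := by
  rw [integral_pos_iff_support_of_nonneg_ae (h.mono fun _ hx => hx.le) hf]
  refine pos_iff_ne_zero.2 fun hzero => ?_
  obtain ⟨x, hpos, hx⟩ := (h.and (measure_eq_zero_iff_ae_notMem.1 hzero)).exists
  exact hpos.ne' (Function.notMem_support.1 hx)

theorem integral_le_of_ae_le [IsProbabilityMeasure μ] {c : ℝ} (hf : Integrable f μ)
    (h : ∀ᵐ x ∂μ, f x ≤ c) : ∫ x, f x ∂μ ≤ c := by
  simpa using integral_mono_ae hf (integrable_const c) h

end RealIntegral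

noncomputable section Transforms

variable (μ : Measure ℝ)

def negPsi (w : ℝ) : ℝ := ∫ x, w * x / (1 + w * x) ∂μ

def negPsiDeriv (w : ℝ) : ℝ := ∫ x, x / (1 + w * x) ^ 2 ∂μ

def resolventMoment (w : ℝ) : ℝ := ∫ x, x / (1 + w * x) ∂μ

def logMoment (w : ℝ) : ℝ := ∫ x, log (1 + w * x) ∂μ

def primitiveLogS (w : ℝ) : ℝ :=
  -((1 - negPsi μ w) * log (1 - negPsi μ w)) - negPsi μ w * log (resolventMoment μ w)
    - logMoment μ w

theorem integral_psi_neg (w : ℝ) :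
    ∫ x, (-w) * x / (1 - (-w) * x) ∂μ = -negPsi μ w := by
  simp [negPsi, ← integral_neg, neg_div]

theorem negPsi_eq_mul (w : ℝ) : negPsi μ w = w * resolventMoment μ w := by
  simp only [negPsi, resolventMoment, ← integral_const_mul, mul_div_assoc]

@[simp] theorem negPsi_zero : negPsi μ 0 = 0 := by simp [negPsi]

@[simp] theorem primitiveLogS_zero : primitiveLogS μ 0 = 0 := by
  simp [primitiveLogS, logMoment]

end Transforms

section FiniteMeasureOnIcc

variable {μ : Measure ℝ} {a b w : ℝ}

theorem one_add_mul_pos_of_mem (ha : 0 < a) (hab : a ≤ b) {x : ℝ} (hw : w ∈ Ioi (-b⁻¹))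
    (hx : x ∈ Icc a b) : 0 < 1 + w * x := by
  have hb : 0 < b := ha.trans_le hab
  have hx0 : 0 < x := ha.trans_le hx.1
  rcases le_or_gt 0 w with hw0 | hw0
  · positivity
  · have h1 : -1 < w * b := by
      have := mul_lt_mul_of_pos_right (mem_Ioi.1 hw) hb
      rwa [neg_mul, inv_mul_cancel₀ hb.ne'] at this
    nlinarith [mul_le_mul_of_nonpos_left hx.2 hw0.le]

theorem one_add_mul_pos_of_nonneg (ha : 0 < a) (hw : 0 ≤ w) {x : ℝ} (hx : x ∈ Icc a b) :
    0 < 1 + w * x := by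
  have := ha.trans_le hx.1
  positivity

theorem mem_Ioi_neg_inv (hb : 0 < b) (hw : 0 ≤ w) : w ∈ Ioi (-b⁻¹) :=
  (neg_neg_of_pos (inv_pos.2 hb)).trans_le hw

variable [IsFiniteMeasure μ]

theorem integrable_inv_one_add_mul (ha : 0 < a) (hμ : ∀ᵐ x ∂μ, x ∈ Icc a b)
    (hw : 0 ≤ w) : Integrable (fun x => (1 + w * x)⁻¹) μ :=
  integrable_of_continuousOn_of_ae_mem isCompact_Icc hμ
    (ContinuousOn.inv₀ (by fun_prop) fun _ hx => (one_add_mul_pos_of_nonneg ha hw hx).ne')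

theorem integrable_div_one_add_mul (ha : 0 < a) (hμ : ∀ᵐ x ∂μ, x ∈ Icc a b)
    (hw : 0 ≤ w) : Integrable (fun x => x / (1 + w * x)) μ :=
  integrable_of_continuousOn_of_ae_mem isCompact_Icc hμ
    (ContinuousOn.div (by fun_prop) (by fun_prop) fun _ hx =>
      (one_add_mul_pos_of_nonneg ha hw hx).ne')

theorem integrable_log_one_add_inv_mul (ha : 0 < a) (hμ : ∀ᵐ x ∂μ, x ∈ Icc a b)
    (hw : 0 < w) : Integrable (fun x => log (1 + (w * x)⁻¹)) μ :=
  integrable_of_continuousOn_of_ae_mem isCompact_Icc hμ <|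
    ContinuousOn.log (continuousOn_const.add (ContinuousOn.inv₀ (by fun_prop) fun x hx =>
      (mul_pos hw (ha.trans_le hx.1)).ne')) fun x hx => by
        have := ha.trans_le hx.1
        positivity

theorem negPsiDeriv_eq (ha : 0 < a) (hμ : ∀ᵐ x ∂μ, x ∈ Icc a b) (hw : 0 ≤ w) :
    negPsiDeriv μ w = resolventMoment μ w + w * ∫ x, -(x ^ 2 / (1 + w * x) ^ 2) ∂μ := by
  have hint : Integrable (fun x => w * -(x ^ 2 / (1 + w * x) ^ 2)) μ :=
    integrable_of_continuousOn_of_ae_mem isCompact_Icc hμ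
      (continuousOn_const.mul (ContinuousOn.div (by fun_prop) (by fun_prop) fun _ hx =>
        pow_ne_zero 2 (one_add_mul_pos_of_nonneg ha hw hx).ne').neg)
  rw [negPsiDeriv, resolventMoment, ← integral_const_mul,
    ← integral_add (integrable_div_one_add_mul ha hμ hw) hint]
  refine integral_congr_ae (hμ.mono fun x hx => ?_)
  have := one_add_mul_pos_of_nonneg ha hw hx
  field_simp
  ring

theorem hasDerivAt_negPsi (ha : 0 < a) (hab : a ≤ b) (hμ : ∀ᵐ x ∂μ, x ∈ Icc a b)
    (hw : 0 ≤ w) : HasDerivAt (negPsi μ) (negPsiDeriv μ w) w := by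
  refine hasDerivAt_integral_of_continuousOn_prod (f := fun w x => w * x / (1 + w * x))
    (f' := fun w x => x / (1 + w * x) ^ 2) isCompact_Icc hμ isOpen_Ioi
    (fun w hw => ?_) ?_ (fun w hw x hx => ?_) (mem_Ioi_neg_inv (ha.trans_le hab) hw)
  · exact ContinuousOn.div (by fun_prop) (by fun_prop) fun x hx =>
      (one_add_mul_pos_of_mem ha hab hw hx).ne'
  · exact ContinuousOn.div (by fun_prop) (by fun_prop) fun p hp =>
      pow_ne_zero 2 (one_add_mul_pos_of_mem ha hab hp.1 hp.2).ne'
  · have hden := ((hasDerivAt_id' w).mul_const x).const_add 1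
    refine (((hasDerivAt_id' w).mul_const x).div hden
      (one_add_mul_pos_of_mem ha hab hw hx).ne').congr_deriv ?_
    field_simp
    ring

theorem hasDerivAt_resolventMoment (ha : 0 < a) (hab : a ≤ b)
    (hμ : ∀ᵐ x ∂μ, x ∈ Icc a b) (hw : 0 ≤ w) :
    HasDerivAt (resolventMoment μ) (∫ x, -(x ^ 2 / (1 + w * x) ^ 2) ∂μ) w := by
  refine hasDerivAt_integral_of_continuousOn_prod (f := fun w x => x / (1 + w * x))
    (f' := fun w x => -(x ^ 2 / (1 + w * x) ^ 2)) isCompact_Icc hμ isOpen_Ioi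
    (fun w hw => ?_) ?_ (fun w hw x hx => ?_) (mem_Ioi_neg_inv (ha.trans_le hab) hw)
  · exact ContinuousOn.div (by fun_prop) (by fun_prop) fun x hx =>
      (one_add_mul_pos_of_mem ha hab hw hx).ne'
  · exact (ContinuousOn.div (by fun_prop) (by fun_prop) fun p hp =>
      pow_ne_zero 2 (one_add_mul_pos_of_mem ha hab hp.1 hp.2).ne').neg
  · have hden := ((hasDerivAt_id' w).mul_const x).const_add 1
    refine ((hasDerivAt_const w x).div hden
      (one_add_mul_pos_of_mem ha hab hw hx).ne').congr_deriv ?_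
    field_simp
    ring

theorem hasDerivAt_logMoment (ha : 0 < a) (hab : a ≤ b) (hμ : ∀ᵐ x ∂μ, x ∈ Icc a b)
    (hw : 0 ≤ w) : HasDerivAt (logMoment μ) (resolventMoment μ w) w := by
  refine hasDerivAt_integral_of_continuousOn_prod (f := fun w x => log (1 + w * x))
    (f' := fun w x => x / (1 + w * x)) isCompact_Icc hμ isOpen_Ioi
    (fun w hw => ?_) ?_ (fun w hw x hx => ?_) (mem_Ioi_neg_inv (ha.trans_le hab) hw)
  · exact ContinuousOn.log (by fun_prop) fun x hx =>
      (one_add_mul_pos_of_mem ha hab hw hx).ne'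
  · exact ContinuousOn.div (by fun_prop) (by fun_prop) fun p hp =>
      (one_add_mul_pos_of_mem ha hab hp.1 hp.2).ne'
  · exact ((((hasDerivAt_id' w).mul_const x).const_add 1).log
      (one_add_mul_pos_of_mem ha hab hw hx).ne').congr_deriv (by rw [one_mul])

end FiniteMeasureOnIcc

section ProbabilityOnIcc

variable {μ : Measure ℝ} [IsProbabilityMeasure μ] {a b w : ℝ}

theorem one_sub_negPsi_eq (ha : 0 < a) (hμ : ∀ᵐ x ∂μ, x ∈ Icc a b) (hw : 0 ≤ w) :
    1 - negPsi μ w = ∫ x, (1 + w * x)⁻¹ ∂μ := by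
  have hint : Integrable (fun x => w * x / (1 + w * x)) μ := by
    simpa only [mul_div_assoc] using (integrable_div_one_add_mul ha hμ hw).const_mul w
  calc 1 - negPsi μ w = ∫ x, (1 - w * x / (1 + w * x)) ∂μ := by
        rw [integral_sub (integrable_const 1) hint, negPsi]
        simp
    _ = ∫ x, (1 + w * x)⁻¹ ∂μ := integral_congr_ae <| hμ.mono fun x hx => by
        have := one_add_mul_pos_of_nonneg ha hw hx
        field_simp
        ring

theorem one_sub_negPsi_pos (ha : 0 < a) (hμ : ∀ᵐ x ∂μ, x ∈ Icc a b) (hw : 0 ≤ w) :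
    0 < 1 - negPsi μ w := by
  rw [one_sub_negPsi_eq ha hμ hw]
  exact integral_pos_of_ae_pos (integrable_inv_one_add_mul ha hμ hw)
    (hμ.mono fun x hx => inv_pos.2 (one_add_mul_pos_of_nonneg ha hw hx))

theorem mul_one_sub_negPsi_le_resolventMoment (ha : 0 < a) (hμ : ∀ᵐ x ∂μ, x ∈ Icc a b)
    (hw : 0 ≤ w) : a * (1 - negPsi μ w) ≤ resolventMoment μ w := by
  rw [one_sub_negPsi_eq ha hμ hw, ← integral_const_mul]
  refine integral_mono_ae ((integrable_inv_one_add_mul ha hμ hw).const_mul a)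
    (integrable_div_one_add_mul ha hμ hw) (hμ.mono fun x hx => ?_)
  simp only [div_eq_mul_inv]
  exact mul_le_mul_of_nonneg_right hx.1 (inv_nonneg.2 (one_add_mul_pos_of_nonneg ha hw hx).le)

theorem resolventMoment_le_mul_one_sub_negPsi (ha : 0 < a) (hμ : ∀ᵐ x ∂μ, x ∈ Icc a b)
    (hw : 0 ≤ w) : resolventMoment μ w ≤ b * (1 - negPsi μ w) := by
  rw [one_sub_negPsi_eq ha hμ hw, ← integral_const_mul]
  refine integral_mono_ae (integrable_div_one_add_mul ha hμ hw)
    ((integrable_inv_one_add_mul ha hμ hw).const_mul b) (hμ.mono fun x hx => ?_)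
  simp only [div_eq_mul_inv]
  exact mul_le_mul_of_nonneg_right hx.2 (inv_nonneg.2 (one_add_mul_pos_of_nonneg ha hw hx).le)

theorem resolventMoment_pos (ha : 0 < a) (hμ : ∀ᵐ x ∂μ, x ∈ Icc a b) (hw : 0 ≤ w) :
    0 < resolventMoment μ w :=
  (mul_pos ha (one_sub_negPsi_pos ha hμ hw)).trans_le
    (mul_one_sub_negPsi_le_resolventMoment ha hμ hw)

theorem negPsi_pos (ha : 0 < a) (hμ : ∀ᵐ x ∂μ, x ∈ Icc a b) (hw : 0 < w) :
    0 < negPsi μ w := by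
  rw [negPsi_eq_mul]
  exact mul_pos hw (resolventMoment_pos ha hμ hw.le)

theorem one_sub_negPsi_le (ha : 0 < a) (hμ : ∀ᵐ x ∂μ, x ∈ Icc a b) (hw : 0 < w) :
    1 - negPsi μ w ≤ (w * a)⁻¹ := by
  rw [one_sub_negPsi_eq ha hμ hw.le]
  refine integral_le_of_ae_le (integrable_inv_one_add_mul ha hμ hw.le) (hμ.mono fun x hx => ?_)
  exact inv_anti₀ (by positivity) (by nlinarith [mul_le_mul_of_nonneg_left hx.1 hw.le])

theorem negPsiDeriv_pos (ha : 0 < a) (hμ : ∀ᵐ x ∂μ, x ∈ Icc a b) (hw : 0 ≤ w) :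
    0 < negPsiDeriv μ w := by
  have hint : Integrable (fun x => x / (1 + w * x) ^ 2) μ :=
    integrable_of_continuousOn_of_ae_mem isCompact_Icc hμ
      (ContinuousOn.div (by fun_prop) (by fun_prop) fun _ hx =>
        pow_ne_zero 2 (one_add_mul_pos_of_nonneg ha hw hx).ne')
  refine integral_pos_of_ae_pos hint (hμ.mono fun x hx => ?_)
  have := one_add_mul_pos_of_nonneg ha hw hx
  have := ha.trans_le hx.1
  positivity

theorem abs_log_one_sub_negPsi_div_le (ha : 0 < a) (hμ : ∀ᵐ x ∂μ, x ∈ Icc a b)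
    (hw : 0 ≤ w) :
    |log ((1 - negPsi μ w) / resolventMoment μ w)| ≤ max |log a| |log b| := by
  have hA := one_sub_negPsi_pos ha hμ hw
  have hlow : a ≤ resolventMoment μ w / (1 - negPsi μ w) :=
    (le_div_iff₀ hA).2 (mul_one_sub_negPsi_le_resolventMoment ha hμ hw)
  have hupp : resolventMoment μ w / (1 - negPsi μ w) ≤ b :=
    (div_le_iff₀ hA).2 (resolventMoment_le_mul_one_sub_negPsi ha hμ hw)
  rw [← abs_neg, ← log_inv, inv_div]
  exact abs_le_max_abs_abs (log_le_log ha hlow) (log_le_log (ha.trans_le hlow) hupp)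

theorem tendsto_one_sub_negPsi_atTop (ha : 0 < a) (hμ : ∀ᵐ x ∂μ, x ∈ Icc a b) :
    Tendsto (fun w => 1 - negPsi μ w) atTop (𝓝 0) := by
  have hlim : Tendsto (fun w : ℝ => (w * a)⁻¹) atTop (𝓝 0) :=
    tendsto_inv_atTop_zero.comp (tendsto_id.atTop_mul_const ha)
  refine tendsto_of_tendsto_of_tendsto_of_le_of_le' tendsto_const_nhds hlim ?_ ?_
  · filter_upwards [eventually_ge_atTop 0] with w hw using (one_sub_negPsi_pos ha hμ hw).le
  · filter_upwards [eventually_gt_atTop 0] with w hw using one_sub_negPsi_le ha hμ hw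

theorem tendsto_negPsi_atTop (ha : 0 < a) (hμ : ∀ᵐ x ∂μ, x ∈ Icc a b) :
    Tendsto (negPsi μ) atTop (𝓝 1) := by
  simpa using (tendsto_one_sub_negPsi_atTop ha hμ).const_sub 1

theorem tendsto_one_sub_negPsi_mul_log_atTop (ha : 0 < a) (hμ : ∀ᵐ x ∂μ, x ∈ Icc a b) :
    Tendsto (fun w => (1 - negPsi μ w) * log w) atTop (𝓝 0) := by
  have hlim : Tendsto (fun w => a⁻¹ * (log w / w)) atTop (𝓝 0) := by
    simpa using isLittleO_log_id_atTop.tendsto_div_nhds_zero.const_mul a⁻¹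
  refine tendsto_of_tendsto_of_tendsto_of_le_of_le' tendsto_const_nhds hlim ?_ ?_
  · filter_upwards [eventually_ge_atTop 1] with w hw using
      mul_nonneg (one_sub_negPsi_pos ha hμ (by linarith)).le (log_nonneg hw)
  · filter_upwards [eventually_ge_atTop 1] with w hw
    calc (1 - negPsi μ w) * log w ≤ (w * a)⁻¹ * log w :=
          mul_le_mul_of_nonneg_right (one_sub_negPsi_le ha hμ (by linarith)) (log_nonneg hw)
      _ = a⁻¹ * (log w / w) := by ring

theorem logMoment_sub_log_eq (ha : 0 < a) (hμ : ∀ᵐ x ∂μ, x ∈ Icc a b)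
    (hw : 0 < w) :
    logMoment μ w - log w = ∫ x, log x ∂μ + ∫ x, log (1 + (w * x)⁻¹) ∂μ := by
  have hlog : Integrable log μ := integrable_of_continuousOn_of_ae_mem isCompact_Icc hμ
    (continuousOn_log.mono fun x hx => (ha.trans_le hx.1).ne')
  have hrest := integrable_log_one_add_inv_mul ha hμ hw
  have hsum : Integrable (fun x => log x + log (1 + (w * x)⁻¹)) μ := hlog.add hrest
  have hsplit : logMoment μ w = ∫ x, (log w + (log x + log (1 + (w * x)⁻¹))) ∂μ :=
    integral_congr_ae <| hμ.mono fun x hx => by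
      have hx0 := ha.trans_le hx.1
      dsimp only
      rw [← log_mul hx0.ne' (by positivity), ← log_mul hw.ne' (by positivity)]
      congr 1
      field_simp
      ring
  rw [hsplit, integral_add (integrable_const _) hsum, integral_add hlog hrest]
  simp

theorem tendsto_logMoment_sub_log_atTop (ha : 0 < a) (hμ : ∀ᵐ x ∂μ, x ∈ Icc a b) :
    Tendsto (fun w => logMoment μ w - log w) atTop (𝓝 (∫ x, log x ∂μ)) := by
  have hlim : Tendsto (fun w : ℝ => (w * a)⁻¹) atTop (𝓝 0) :=
    tendsto_inv_atTop_zero.comp (tendsto_id.atTop_mul_const ha)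
  have hrest : Tendsto (fun w => ∫ x, log (1 + (w * x)⁻¹) ∂μ) atTop (𝓝 0) := by
    refine tendsto_of_tendsto_of_tendsto_of_le_of_le' tendsto_const_nhds hlim ?_ ?_
    · filter_upwards [eventually_gt_atTop 0] with w hw
      refine integral_nonneg_of_ae (hμ.mono fun x hx => log_nonneg ?_)
      have := ha.trans_le hx.1
      simp only [le_add_iff_nonneg_right]
      positivity
    · filter_upwards [eventually_gt_atTop 0] with w hw
      refine integral_le_of_ae_le (integrable_log_one_add_inv_mul ha hμ hw)
        (hμ.mono fun x hx => ?_)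
      have := ha.trans_le hx.1
      calc log (1 + (w * x)⁻¹) ≤ 1 + (w * x)⁻¹ - 1 := log_le_sub_one_of_pos (by positivity)
        _ ≤ (w * a)⁻¹ := by
          rw [add_sub_cancel_left]
          exact inv_anti₀ (by positivity) (mul_le_mul_of_nonneg_left hx.1 hw.le)
  have hlim' := hrest.const_add (∫ x, log x ∂μ)
  rw [add_zero] at hlim'
  refine hlim'.congr' ?_
  filter_upwards [eventually_gt_atTop 0] with w hw using (logMoment_sub_log_eq ha hμ hw).symm

theorem tendsto_primitiveLogS_atTop (ha : 0 < a) (hμ : ∀ᵐ x ∂μ, x ∈ Icc a b) :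
    Tendsto (primitiveLogS μ) atTop (𝓝 (-∫ x, log x ∂μ)) := by
  have h₁ : Tendsto (fun w => (1 - negPsi μ w) * log (1 - negPsi μ w)) atTop (𝓝 0) := by
    simpa [Function.comp_def] using
      (continuous_mul_log.tendsto 0).comp (tendsto_one_sub_negPsi_atTop ha hμ)
  have h₂ : Tendsto (fun w => negPsi μ w * log (negPsi μ w)) atTop (𝓝 0) := by
    simpa [Function.comp_def] using
      (continuous_mul_log.tendsto 1).comp (tendsto_negPsi_atTop ha hμ)
  have hlim := ((h₁.neg.sub h₂).sub (tendsto_one_sub_negPsi_mul_log_atTop ha hμ)).sub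
    (tendsto_logMoment_sub_log_atTop ha hμ)
  simp only [neg_zero, sub_zero, zero_sub] at hlim
  refine hlim.congr' ?_
  -- for `w > 0`, `log B = log Φ - log w` turns `G` into
  -- `-(1 - Φ) log (1 - Φ) - Φ log Φ - (1 - Φ) log w - (∫ log (1 + w x) dμ - log w)`
  filter_upwards [eventually_gt_atTop 0] with w hw
  have hB := resolventMoment_pos ha hμ hw.le
  simp only [primitiveLogS, negPsi_eq_mul μ w, log_mul hw.ne' hB.ne']
  ring

theorem hasDerivAt_primitiveLogS (ha : 0 < a) (hab : a ≤ b) (hμ : ∀ᵐ x ∂μ, x ∈ Icc a b)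
    (hw : 0 ≤ w) :
    HasDerivAt (primitiveLogS μ)
      (negPsiDeriv μ w * log ((1 - negPsi μ w) / resolventMoment μ w)) w := by
  have hΦ := hasDerivAt_negPsi ha hab hμ hw
  have hA : HasDerivAt (fun w => 1 - negPsi μ w) (-negPsiDeriv μ w) w := hΦ.const_sub 1
  have hApos := one_sub_negPsi_pos ha hμ hw
  have hBpos := resolventMoment_pos ha hμ hw
  refine (((hA.mul (hA.log hApos.ne')).neg.sub
    (hΦ.mul ((hasDerivAt_resolventMoment ha hab hμ hw).log hBpos.ne'))).sub
    (hasDerivAt_logMoment ha hab hμ hw)).congr_deriv ?_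
  have hcancel : negPsi μ w * ((∫ x, -(x ^ 2 / (1 + w * x) ^ 2) ∂μ) / resolventMoment μ w) =
      w * ∫ x, -(x ^ 2 / (1 + w * x) ^ 2) ∂μ := by
    rw [negPsi_eq_mul]
    field_simp
  rw [hcancel, mul_div_cancel₀ _ hApos.ne', log_div hApos.ne' hBpos.ne', negPsiDeriv_eq ha hμ hw]
  ring

theorem integrableOn_negPsiDeriv (ha : 0 < a) (hab : a ≤ b)
    (hμ : ∀ᵐ x ∂μ, x ∈ Icc a b) : IntegrableOn (negPsiDeriv μ) (Ioi 0) :=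
  integrableOn_Ioi_deriv_of_nonneg' (fun _ hw => hasDerivAt_negPsi ha hab hμ hw)
    (fun _ hw => (negPsiDeriv_pos ha hμ (hw.le)).le) (tendsto_negPsi_atTop ha hμ)

theorem integrableOn_and_integral_deriv_primitiveLogS (ha : 0 < a) (hab : a ≤ b)
    (hμ : ∀ᵐ x ∂μ, x ∈ Icc a b) :
    IntegrableOn (fun w => negPsiDeriv μ w * log ((1 - negPsi μ w) / resolventMoment μ w))
      (Ioi 0) ∧
    ∫ w in Ioi 0, negPsiDeriv μ w * log ((1 - negPsi μ w) / resolventMoment μ w) =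
      -∫ x, log x ∂μ := by
  have hcont : ContinuousOn (fun w => log ((1 - negPsi μ w) / resolventMoment μ w)) (Ioi 0) :=
    fun w (hw : 0 < w) => ContinuousAt.continuousWithinAt <|
      ((hasDerivAt_negPsi ha hab hμ hw.le).continuousAt.const_sub 1).div
        (hasDerivAt_resolventMoment ha hab hμ hw.le).continuousAt
        (resolventMoment_pos ha hμ hw.le).ne' |>.log
        (div_pos (one_sub_negPsi_pos ha hμ hw.le) (resolventMoment_pos ha hμ hw.le)).ne'
  have hint := (integrableOn_negPsiDeriv ha hab hμ).mul_bdd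
    (hcont.aestronglyMeasurable measurableSet_Ioi)
    ((ae_restrict_iff' measurableSet_Ioi).2 (.of_forall fun w (hw : 0 < w) =>
      (norm_eq_abs _).trans_le (abs_log_one_sub_negPsi_div_le ha hμ hw.le)))
  refine ⟨hint, ?_⟩
  rw [integral_Ioi_of_hasDerivAt_of_tendsto
    (hasDerivAt_primitiveLogS ha hab hμ le_rfl).continuousAt.continuousWithinAt
    (fun _ hw => hasDerivAt_primitiveLogS ha hab hμ (hw.le)) hint
    (tendsto_primitiveLogS_atTop ha hμ), primitiveLogS_zero, sub_zero]

theorem strictMonoOn_negPsi (ha : 0 < a) (hab : a ≤ b) (hμ : ∀ᵐ x ∂μ, x ∈ Icc a b) :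
    StrictMonoOn (negPsi μ) (Ici 0) :=
  strictMonoOn_of_hasDerivWithinAt_pos (convex_Ici 0)
    (fun _ hw => (hasDerivAt_negPsi ha hab hμ hw).continuousAt.continuousWithinAt)
    (fun _ hw => (hasDerivAt_negPsi ha hab hμ (interior_subset hw)).hasDerivWithinAt)
    (fun _ hw => negPsiDeriv_pos ha hμ (interior_subset hw))

theorem image_negPsi_Ioi (ha : 0 < a) (hab : a ≤ b) (hμ : ∀ᵐ x ∂μ, x ∈ Icc a b) :
    negPsi μ '' Ioi 0 = Ioo 0 1 := by
  refine Subset.antisymm ?_ fun t ht => ?_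
  · rintro _ ⟨w, hw, rfl⟩
    exact ⟨negPsi_pos ha hμ hw, sub_pos.1 (one_sub_negPsi_pos ha hμ (hw.le))⟩
  · obtain ⟨w, hw, htw⟩ := ((eventually_ge_atTop 0).and
      ((tendsto_negPsi_atTop ha hμ).eventually (lt_mem_nhds ht.2))).exists
    have hcont : ContinuousOn (negPsi μ) (Icc 0 w) := fun v hv =>
      (hasDerivAt_negPsi ha hab hμ hv.1).continuousAt.continuousWithinAt
    obtain ⟨v, hv, rfl⟩ := intermediate_value_Ioo hw hcont ⟨by simpa using ht.1, htw⟩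
    exact ⟨v, hv.1, rfl⟩

theorem integral_Ioo_eq_neg_integral_log_of_comp_negPsi (ha : 0 < a) (hab : a ≤ b)
    (hμ : ∀ᵐ x ∂μ, x ∈ Icc a b) {φ : ℝ → ℝ}
    (hφ : ∀ w > 0, φ (negPsi μ w) = log ((1 - negPsi μ w) / resolventMoment μ w)) :
    IntegrableOn φ (Ioo 0 1) ∧ ∫ t in Ioo 0 1, φ t = -∫ x, log x ∂μ := by
  have hderiv : ∀ w ∈ Ioi 0, HasDerivWithinAt (negPsi μ) (negPsiDeriv μ w) (Ioi 0) w :=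
    fun _ hw => (hasDerivAt_negPsi ha hab hμ (hw.le)).hasDerivWithinAt
  have hinj : InjOn (negPsi μ) (Ioi 0) :=
    ((strictMonoOn_negPsi ha hab hμ).mono Ioi_subset_Ici_self).injOn
  have hEq : EqOn (fun w => |negPsiDeriv μ w| • φ (negPsi μ w))
      (fun w => negPsiDeriv μ w * log ((1 - negPsi μ w) / resolventMoment μ w)) (Ioi 0) :=
    fun w hw => by
      simp only [smul_eq_mul]
      rw [abs_of_pos (negPsiDeriv_pos ha hμ (hw.le)), hφ w hw]
  obtain ⟨hint, hval⟩ := integrableOn_and_integral_deriv_primitiveLogS ha hab hμ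
  rw [← image_negPsi_Ioi ha hab hμ,
    integrableOn_image_iff_integrableOn_abs_deriv_smul measurableSet_Ioi hderiv hinj,
    integral_image_eq_integral_abs_deriv_smul measurableSet_Ioi hderiv hinj,
    setIntegral_congr_fun measurableSet_Ioi hEq]
  exact ⟨hint.congr_fun hEq.symm measurableSet_Ioi, hval⟩

end ProbabilityOnIcc

theorem IsCompact.exists_subset_Icc_of_subset_Ioi {K : Set ℝ} (hK : IsCompact K)
    (hKpos : K ⊆ Ioi 0) : ∃ a b, 0 < a ∧ a ≤ b ∧ K ⊆ Icc a b := by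
  rcases K.eq_empty_or_nonempty with rfl | hne
  · exact ⟨1, 1, one_pos, le_rfl, empty_subset _⟩
  · exact ⟨sInf K, sSup K, hKpos (hK.sInf_mem hne), csInf_le_csSup hne hK.bddBelow hK.bddAbove,
      fun x hx => ⟨csInf_le hK.bddBelow hx, le_csSup hK.bddAbove hx⟩⟩

theorem stmt8_general (μ : Measure ℝ) [IsProbabilityMeasure μ]
    (K : Set ℝ) (hK : IsCompact K) (hKpos : K ⊆ Set.Ioi 0) (hμK : μ Kᶜ = 0)
    (χ : ℝ → ℝ) (S : ℝ → ℝ)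
    (hχleft : ∀ z < (0 : ℝ), χ (∫ x, z * x / (1 - z * x) ∂μ) = z)
    (hS : ∀ z ∈ Set.Ioo (-1 : ℝ) 0, S z = ((1 + z) / z) * χ z) :
    IntegrableOn (fun t : ℝ => Real.log (S (-t))) (Set.Ioo (0 : ℝ) 1) ∧
    ∫ x, Real.log x ∂μ = -∫ t in Set.Ioo (0 : ℝ) 1, Real.log (S (-t)) := by
  obtain ⟨a, b, ha, hab, hKab⟩ := hK.exists_subset_Icc_of_subset_Ioi hKpos
  have hμ : ∀ᵐ x ∂μ, x ∈ Icc a b := mem_of_superset (mem_ae_iff.2 hμK) hKab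
  have hlogS : ∀ w > 0, log (S (-negPsi μ w)) =
      log ((1 - negPsi μ w) / resolventMoment μ w) := by
    intro w hw
    have hB := resolventMoment_pos ha hμ hw.le
    have hΦ : negPsi μ w ∈ Ioo 0 1 := image_negPsi_Ioi ha hab hμ ▸ mem_image_of_mem _ hw
    have hχ : χ (-negPsi μ w) = -w := by
      have := hχleft (-w) (neg_neg_of_pos hw)
      rwa [integral_psi_neg] at this
    rw [hS _ ⟨neg_lt_neg hΦ.2, neg_neg_of_pos hΦ.1⟩, hχ]
    congr 1
    rw [negPsi_eq_mul]
    field_simp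
    ring
  obtain ⟨hint, hval⟩ :=
    integral_Ioo_eq_neg_integral_log_of_comp_negPsi ha hab hμ (φ := fun t => log (S (-t))) hlogS
  exact ⟨hint, by rw [hval, neg_neg]⟩

/-- Let `μ` be a Borel probability measure on `ℝ` whose support is a compact subset `K` of
`(0,∞)`, let `ψ(z) = ∫ z·x/(1 − z·x) dμ(x)` for `z < 0`, let `χ : (−1,0) → (−∞,0)` denote
the inverse of the bijection `ψ : (−∞,0) → (−1,0)`, and define `S(z) = ((1+z)/z)·χ(z)` for
`z ∈ (−1,0)`.  Then the improper integral `∫₀^1 log S(−t) dt` converges, and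
`∫ log x dμ(x) = −∫₀^1 log S(−t) dt`. -/
theorem stmt8 (μ : Measure ℝ) [IsProbabilityMeasure μ]
    (K : Set ℝ) (hK : IsCompact K) (hKpos : K ⊆ Set.Ioi 0) (hμK : μ Kᶜ = 0)
    (χ : ℝ → ℝ) (S : ℝ → ℝ)
    (hχneg : ∀ u ∈ Set.Ioo (-1 : ℝ) 0, χ u < 0)
    (hχright : ∀ u ∈ Set.Ioo (-1 : ℝ) 0, ∫ x, (χ u) * x / (1 - (χ u) * x) ∂μ = u)
    (hχleft : ∀ z < (0 : ℝ), χ (∫ x, z * x / (1 - z * x) ∂μ) = z)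
    (hS : ∀ z ∈ Set.Ioo (-1 : ℝ) 0, S z = ((1 + z) / z) * χ z) :
    IntegrableOn (fun t : ℝ => Real.log (S (-t))) (Set.Ioo (0 : ℝ) 1) ∧
    ∫ x, Real.log x ∂μ = -∫ t in Set.Ioo (0 : ℝ) 1, Real.log (S (-t)) :=
  stmt8_general μ K hK hKpos hμK χ S hχleft hS
end

section
/- Let μ be a Borel probability measure on ℝ whose support is a compact subset of (0,∞), let ψ(z) = ∫ z·x/(1 − z·x) dμ(x) for z < 0, and let χ : (−1,0) → (−∞,0) denote the inverse of the bijection ψ : (−∞,0) → (−1,0). Then lim_{z→0⁻} ((1+z)/z)·χ(z) = 1 / ∫ x dμ(x). -/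
open Real MeasureTheory Filter

/-!
Write `m = ∫ x dμ` and `I z = ∫ x / (1 - z x) dμ`, so that `ψ z = z · I z`. For `z = χ u` this reads
`u = χ u · I (χ u)`, hence `((1 + u) / u) · χ u = (1 + u) / I (χ u)`. If `μ` lives on `[a, b]` with
`0 < a`, then `ψ z ≤ z a / (1 - z a)` forces `χ u → 0⁻` as `u → 0⁻`, and
`m / (1 - z b) ≤ I z ≤ m` gives `I z → m` as `z → 0⁻`; so the quotient tends to `1 / m`.
-/

open Set Topology

lemma exists_pos_Icc_of_isCompact_subset_Ioi {K : Set ℝ} (hK : IsCompact K)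
    (hKpos : K ⊆ Ioi 0) : ∃ a b, 0 < a ∧ K ⊆ Icc a b := by
  rcases K.eq_empty_or_nonempty with rfl | hne
  · exact ⟨1, 1, one_pos, empty_subset _⟩
  · exact ⟨sInf K, sSup K, hKpos (hK.sInf_mem hne),
      fun x hx => ⟨csInf_le hK.bddBelow hx, le_csSup hK.bddAbove hx⟩⟩

lemma one_le_one_sub_mul {z x : ℝ} (hz : z ≤ 0) (hx : 0 ≤ x) : 1 ≤ 1 - z * x := by
  nlinarith

lemma div_one_sub_mul_le {z x : ℝ} (hz : z ≤ 0) (hx : 0 ≤ x) : x / (1 - z * x) ≤ x :=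
  div_le_self hx (one_le_one_sub_mul hz hx)

section SupportedOnIcc

variable {μ : Measure ℝ} {a b z : ℝ}

lemma integrable_id_of_ae_mem_Icc [IsFiniteMeasure μ] (hsupp : ∀ᵐ x ∂μ, x ∈ Icc a b) :
    Integrable (fun x => x) μ :=
  Integrable.of_bound measurable_id.aestronglyMeasurable (max |a| |b|)
    (hsupp.mono fun _ hx => abs_le_max_abs_abs hx.1 hx.2)

lemma integrable_div_one_sub_mul [IsFiniteMeasure μ] (ha : 0 ≤ a)
    (hsupp : ∀ᵐ x ∂μ, x ∈ Icc a b) (hz : z ≤ 0) :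
    Integrable (fun x => x / (1 - z * x)) μ := by
  refine (integrable_id_of_ae_mem_Icc hsupp).mono
    (by fun_prop : Measurable fun x : ℝ => x / (1 - z * x)).aestronglyMeasurable
    (hsupp.mono fun x hx => ?_)
  have hx0 : 0 ≤ x := ha.trans hx.1
  have hd : 0 < 1 - z * x := one_pos.trans_le (one_le_one_sub_mul hz hx0)
  rw [norm_of_nonneg (div_nonneg hx0 hd.le), norm_of_nonneg hx0]
  exact div_one_sub_mul_le hz hx0

lemma le_integral_id_of_ae_mem_Icc [IsProbabilityMeasure μ] (hsupp : ∀ᵐ x ∂μ, x ∈ Icc a b) :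
    a ≤ ∫ x, x ∂μ := by
  simpa using integral_mono_ae (integrable_const a) (integrable_id_of_ae_mem_Icc hsupp)
    (hsupp.mono fun _ hx => hx.1)

lemma integral_div_one_sub_mul_le [IsFiniteMeasure μ] (ha : 0 ≤ a)
    (hsupp : ∀ᵐ x ∂μ, x ∈ Icc a b) (hz : z ≤ 0) :
    ∫ x, x / (1 - z * x) ∂μ ≤ ∫ x, x ∂μ :=
  integral_mono_ae (integrable_div_one_sub_mul ha hsupp hz) (integrable_id_of_ae_mem_Icc hsupp)
    (hsupp.mono fun _ hx => div_one_sub_mul_le hz (ha.trans hx.1))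

lemma integral_div_le_integral_div_one_sub_mul [IsFiniteMeasure μ] (ha : 0 ≤ a)
    (hsupp : ∀ᵐ x ∂μ, x ∈ Icc a b) (hz : z ≤ 0) :
    (∫ x, x ∂μ) / (1 - z * b) ≤ ∫ x, x / (1 - z * x) ∂μ := by
  rw [← integral_div]
  refine integral_mono_ae ((integrable_id_of_ae_mem_Icc hsupp).div_const _)
    (integrable_div_one_sub_mul ha hsupp hz) (hsupp.mono fun x hx => ?_)
  have hx0 : 0 ≤ x := ha.trans hx.1
  exact div_le_div_of_nonneg_left hx0 (one_pos.trans_le (one_le_one_sub_mul hz hx0))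
    (by nlinarith [hx.2])

lemma tendsto_integral_div_one_sub_mul [IsFiniteMeasure μ] (ha : 0 ≤ a)
    (hsupp : ∀ᵐ x ∂μ, x ∈ Icc a b) :
    Tendsto (fun z => ∫ x, x / (1 - z * x) ∂μ) (𝓝[≤] 0) (𝓝 (∫ x, x ∂μ)) := by
  have hlower : Tendsto (fun z => (∫ x, x ∂μ) / (1 - z * b)) (𝓝[≤] 0) (𝓝 (∫ x, x ∂μ)) := by
    have hc : ContinuousAt (fun z => (∫ x, x ∂μ) / (1 - z * b)) 0 :=
      continuousAt_const.div (by fun_prop) (by simp)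
    simpa using hc.tendsto.mono_left nhdsWithin_le_nhds
  refine tendsto_of_tendsto_of_tendsto_of_le_of_le' hlower tendsto_const_nhds ?_ ?_
  · filter_upwards [self_mem_nhdsWithin] with z hz
    exact integral_div_le_integral_div_one_sub_mul ha hsupp hz
  · filter_upwards [self_mem_nhdsWithin] with z hz
    exact integral_div_one_sub_mul_le ha hsupp hz

-- `t ↦ t / (1 - t)` is increasing on `t < 1`, and `z x ≤ z a` on the support.
lemma integral_mul_div_one_sub_mul_le [IsProbabilityMeasure μ] (ha : 0 ≤ a)
    (hsupp : ∀ᵐ x ∂μ, x ∈ Icc a b) (hz : z ≤ 0) :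
    ∫ x, z * x / (1 - z * x) ∂μ ≤ z * a / (1 - z * a) := by
  have hint : Integrable (fun x => z * x / (1 - z * x)) μ := by
    simpa only [mul_div_assoc] using (integrable_div_one_sub_mul ha hsupp hz).const_mul z
  have hda : 0 < 1 - z * a := one_pos.trans_le (one_le_one_sub_mul hz ha)
  simpa using integral_mono_ae hint (integrable_const (z * a / (1 - z * a)))
    (hsupp.mono fun x hx => by
      have hdx : 0 < 1 - z * x := one_pos.trans_le (one_le_one_sub_mul hz (ha.trans hx.1))
      rw [div_le_div_iff₀ hdx hda]
      nlinarith [mul_nonpos_of_nonpos_of_nonneg hz (sub_nonneg.2 hx.1)])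

lemma tendsto_nhdsLT_of_integral_mul_div_one_sub_mul_eq [IsProbabilityMeasure μ] (ha : 0 < a)
    (hsupp : ∀ᵐ x ∂μ, x ∈ Icc a b) {χ : ℝ → ℝ}
    (hχneg : ∀ u ∈ Ioo (-1 : ℝ) 0, χ u < 0)
    (hχright : ∀ u ∈ Ioo (-1 : ℝ) 0, ∫ x, χ u * x / (1 - χ u * x) ∂μ = u) :
    Tendsto χ (𝓝[Ioo (-1) 0] 0) (𝓝[<] 0) := by
  have hlower : ∀ u ∈ Ioo (-1 : ℝ) 0, u / (1 + u) / a ≤ χ u := by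
    intro u hu
    have hz := hχneg u hu
    have hda : 0 < 1 - χ u * a := by nlinarith
    have hu_le := (le_div_iff₀ hda).1
      (hχright u hu ▸ integral_mul_div_one_sub_mul_le ha.le hsupp hz.le)
    rw [div_le_iff₀ ha, div_le_iff₀ (by linarith [hu.1])]
    nlinarith
  have hlim : Tendsto (fun u => u / (1 + u) / a) (𝓝[Ioo (-1) 0] 0) (𝓝 0) := by
    have hc : ContinuousAt (fun u : ℝ => u / (1 + u) / a) 0 :=
      (continuousAt_id.div (by fun_prop) (by simp)).div_const a
    simpa using hc.tendsto.mono_left nhdsWithin_le_nhds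
  refine tendsto_nhdsWithin_iff.2 ⟨?_, eventually_nhdsWithin_of_forall hχneg⟩
  refine tendsto_of_tendsto_of_tendsto_of_le_of_le' hlim tendsto_const_nhds ?_ ?_
  · exact eventually_nhdsWithin_of_forall hlower
  · exact eventually_nhdsWithin_of_forall fun u hu => (hχneg u hu).le

end SupportedOnIcc

theorem stmt9_general (μ : Measure ℝ) [IsProbabilityMeasure μ]
    (K : Set ℝ) (hK : IsCompact K) (hKpos : K ⊆ Set.Ioi 0) (hμK : μ Kᶜ = 0)
    (χ : ℝ → ℝ)
    (hχneg : ∀ u ∈ Set.Ioo (-1 : ℝ) 0, χ u < 0)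
    (hχright : ∀ u ∈ Set.Ioo (-1 : ℝ) 0, ∫ x, (χ u) * x / (1 - (χ u) * x) ∂μ = u) :
    Tendsto (fun z : ℝ => ((1 + z) / z) * χ z)
      (nhdsWithin 0 (Set.Ioo (-1 : ℝ) 0)) (nhds (1 / ∫ x, x ∂μ)) := by
  obtain ⟨a, b, ha, hKab⟩ := exists_pos_Icc_of_isCompact_subset_Ioi hK hKpos
  have hsupp : ∀ᵐ x ∂μ, x ∈ Icc a b :=
    mem_ae_iff.2 (measure_mono_null (compl_subset_compl.2 hKab) hμK)
  have hI : Tendsto (fun u => ∫ x, x / (1 - χ u * x) ∂μ) (𝓝[Ioo (-1) 0] 0) (𝓝 (∫ x, x ∂μ)) :=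
    (tendsto_integral_div_one_sub_mul ha.le hsupp).comp
      ((tendsto_nhdsLT_of_integral_mul_div_one_sub_mul_eq ha hsupp hχneg hχright).mono_right
        (nhdsWithin_mono _ Iio_subset_Iic_self))
  have hm : (∫ x, x ∂μ) ≠ 0 := (ha.trans_le (le_integral_id_of_ae_mem_Icc hsupp)).ne'
  have hnum : Tendsto (fun u : ℝ => 1 + u) (𝓝[Ioo (-1) 0] 0) (𝓝 1) := by
    have hc : ContinuousAt (fun u : ℝ => 1 + u) 0 := by fun_prop
    simpa using hc.tendsto.mono_left nhdsWithin_le_nhds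
  refine (hnum.div hI hm).congr' (eventually_nhdsWithin_of_forall fun u hu => ?_)
  have hψ : χ u * ∫ x, x / (1 - χ u * x) ∂μ = u := by
    rw [← integral_const_mul]
    simpa only [mul_div_assoc] using hχright u hu
  simp only [Pi.div_apply]
  generalize (∫ x, x / (1 - χ u * x) ∂μ) = I at hψ ⊢
  calc (1 + u) / I = (1 + u) / (χ u * I) * χ u := by
        rw [div_mul_eq_mul_div, mul_comm (χ u) I, mul_div_mul_right _ _ (hχneg u hu).ne]
    _ = (1 + u) / u * χ u := by rw [hψ]

/-- Let `μ` be a Borel probability measure on `ℝ` whose support is a compact subset `K` of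
`(0,∞)`, let `ψ(z) = ∫ z·x/(1 − z·x) dμ(x)` for `z < 0`, and let `χ : (−1,0) → (−∞,0)`
denote the inverse of the bijection `ψ : (−∞,0) → (−1,0)`.  Then
`lim_{z→0⁻} ((1+z)/z)·χ(z) = 1 / ∫ x dμ(x)`. -/
theorem stmt9 (μ : Measure ℝ) [IsProbabilityMeasure μ]
    (K : Set ℝ) (hK : IsCompact K) (hKpos : K ⊆ Set.Ioi 0) (hμK : μ Kᶜ = 0)
    (χ : ℝ → ℝ)
    (hχneg : ∀ u ∈ Set.Ioo (-1 : ℝ) 0, χ u < 0)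
    (hχright : ∀ u ∈ Set.Ioo (-1 : ℝ) 0, ∫ x, (χ u) * x / (1 - (χ u) * x) ∂μ = u)
    (hχleft : ∀ z < (0 : ℝ), χ (∫ x, z * x / (1 - z * x) ∂μ) = z) :
    Tendsto (fun z : ℝ => ((1 + z) / z) * χ z)
      (nhdsWithin 0 (Set.Ioo (-1 : ℝ) 0)) (nhds (1 / ∫ x, x ∂μ)) :=
  stmt9_general μ K hK hKpos hμK χ hχneg hχright
end
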